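/- Define f̄_i(x) := -√n·⟨x, e_i⟩ + ‖x‖²/2 on ℝ^n and F̄ = (1/n)∑_{i=1}^n f̄_i. Then the unique global minimizer of F̄ is x* = (1/√n)∑_{i=1}^n e_i, and any x ∈ ℝ^n whose support has size at most n/2 satisfies F̄(x) - inf F̄ ≥ 1/4. -/

import Mathlib

/-!
Completing the square gives `F̄(x) = ‖x - x⋆‖²/2 - 1/2` with `x⋆ = (1/√n, …, 1/√n)`, so `x⋆` is the
unique minimizer and `inf F̄ = -1/2`. Every coordinate on which `x` vanishes contributes
`(1/√n)² = 1/n` to `‖x - x⋆‖²`; if there are at least `n/2` of them, `‖x - x⋆‖² ≥ 1/2`.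
-/

open scoped RealInnerProductSpace BigOperators

/-- The hard instance `f̄_i(x) = -√n·⟨x, e_i⟩ + ‖x‖²/2` on `ℝ^n`. -/
noncomputable def fBar (n : ℕ) (i : Fin n) (x : EuclideanSpace ℝ (Fin n)) : ℝ :=
  -(Real.sqrt n) * ⟪x, EuclideanSpace.single i (1 : ℝ)⟫ + ‖x‖ ^ 2 / 2

/-- The average `F̄ = (1/n)∑ᵢ f̄_i`. -/
noncomputable def FBar (n : ℕ) (x : EuclideanSpace ℝ (Fin n)) : ℝ :=
  (1 / (n : ℝ)) * ∑ i : Fin n, fBar n i x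

noncomputable def FBarMinimizer (n : ℕ) : EuclideanSpace ℝ (Fin n) :=
  (Real.sqrt n)⁻¹ • ∑ i : Fin n, EuclideanSpace.single i (1 : ℝ)

@[simp]
lemma FBarMinimizer_apply (n : ℕ) (i : Fin n) : FBarMinimizer n i = (Real.sqrt n)⁻¹ := by
  simp [FBarMinimizer]

lemma norm_sub_FBarMinimizer_sq (n : ℕ) (x : EuclideanSpace ℝ (Fin n)) :
    ‖x - FBarMinimizer n‖ ^ 2 = ∑ i, (x i - (Real.sqrt n)⁻¹) ^ 2 := by
  simp [EuclideanSpace.norm_sq_eq]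

lemma FBar_eq_norm_sq_sub (n : ℕ) (hn : 0 < n) (x : EuclideanSpace ℝ (Fin n)) :
    FBar n x = ‖x‖ ^ 2 / 2 - (Real.sqrt n)⁻¹ * ∑ i, x i := by
  have hsqrt0 : Real.sqrt n ≠ 0 := by positivity
  simp only [FBar, fBar, EuclideanSpace.inner_single_right, conj_trivial, Finset.sum_add_distrib,
    ← Finset.mul_sum, Finset.sum_const, Finset.card_univ, Fintype.card_fin, nsmul_eq_mul]
  field_simp
  linear_combination (-2 * ∑ i, x i) * Real.mul_self_sqrt n.cast_nonneg

lemma FBar_eq_norm_sub_sq (n : ℕ) (hn : 0 < n) (x : EuclideanSpace ℝ (Fin n)) :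
    FBar n x = ‖x - FBarMinimizer n‖ ^ 2 / 2 - 1 / 2 := by
  have hsqrt : Real.sqrt n ^ 2 = n := Real.sq_sqrt n.cast_nonneg
  rw [FBar_eq_norm_sq_sub n hn, norm_sub_FBarMinimizer_sq, EuclideanSpace.norm_sq_eq]
  simp only [Real.norm_eq_abs, sq_abs, sub_sq,
    Finset.sum_add_distrib, Finset.sum_sub_distrib, ← Finset.sum_mul, ← Finset.mul_sum,
    Finset.sum_const, Finset.card_univ, Fintype.card_fin, nsmul_eq_mul, inv_pow, hsqrt]
  field_simp
  ring

lemma FBar_FBarMinimizer (n : ℕ) (hn : 0 < n) : FBar n (FBarMinimizer n) = -(1 / 2) := by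
  rw [FBar_eq_norm_sub_sq n hn, sub_self, norm_zero]
  ring

lemma card_filter_eq_zero_mul_sq_le_sum_sq_sub {ι : Type*} [Fintype ι] (x : ι → ℝ) (c : ℝ) :
    (Finset.univ.filter fun i => x i = 0).card * c ^ 2 ≤ ∑ i, (x i - c) ^ 2 :=
  calc (Finset.univ.filter fun i => x i = 0).card * c ^ 2
      = ∑ i ∈ Finset.univ.filter fun i => x i = 0, (x i - c) ^ 2 := by
        rw [Finset.sum_congr rfl fun i hi => by rw [(Finset.mem_filter.mp hi).2, zero_sub, neg_sq],
          Finset.sum_const, nsmul_eq_mul]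
    _ ≤ ∑ i, (x i - c) ^ 2 :=
        Finset.sum_le_sum_of_subset_of_nonneg (Finset.subset_univ _) fun i _ _ => sq_nonneg _

lemma half_le_norm_sub_FBarMinimizer_sq (n : ℕ) (hn : 0 < n) (x : EuclideanSpace ℝ (Fin n))
    (hx : ((Finset.univ.filter fun i : Fin n => x i ≠ 0).card : ℝ) ≤ (n : ℝ) / 2) :
    1 / 2 ≤ ‖x - FBarMinimizer n‖ ^ 2 := by
  have hcard := Finset.card_filter_add_card_filter_not (s := Finset.univ) fun i : Fin n => x i = 0
  rw [Finset.card_univ, Fintype.card_fin] at hcard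
  have hzeros : (n : ℝ) / 2 ≤ (Finset.univ.filter fun i : Fin n => x i = 0).card := by
    rw [← Nat.cast_inj (R := ℝ), Nat.cast_add] at hcard
    linarith
  have hsqrt : (Real.sqrt n)⁻¹ ^ 2 = (n : ℝ)⁻¹ := by rw [inv_pow, Real.sq_sqrt n.cast_nonneg]
  calc 1 / 2 = (n : ℝ) / 2 * (n : ℝ)⁻¹ := by field_simp
    _ ≤ (Finset.univ.filter fun i : Fin n => x i = 0).card * (Real.sqrt n)⁻¹ ^ 2 := by
        rw [hsqrt]; gcongr
    _ ≤ ‖x - FBarMinimizer n‖ ^ 2 := by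
        rw [norm_sub_FBarMinimizer_sq]
        exact card_filter_eq_zero_mul_sq_le_sum_sq_sub _ _

/-- `x* = (1/√n)∑ᵢ eᵢ` is the unique global minimizer of `F̄`, and any `x`
supported on at most `n/2` coordinates satisfies `F̄(x) - inf F̄ ≥ 1/4`. -/
theorem FBar_minimizer_and_gap (n : ℕ) (hn : 0 < n) :
    (∀ z : EuclideanSpace ℝ (Fin n),
        FBar n ((Real.sqrt n)⁻¹ • ∑ i : Fin n, EuclideanSpace.single i (1 : ℝ)) ≤ FBar n z) ∧
      (∀ z : EuclideanSpace ℝ (Fin n), (∀ w, FBar n z ≤ FBar n w) →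
        z = (Real.sqrt n)⁻¹ • ∑ i : Fin n, EuclideanSpace.single i (1 : ℝ)) ∧
      ∀ x : EuclideanSpace ℝ (Fin n),
        ((Finset.univ.filter fun i : Fin n => x i ≠ 0).card : ℝ) ≤ (n : ℝ) / 2 →
          FBar n x - ⨅ z : EuclideanSpace ℝ (Fin n), FBar n z ≥ 1 / 4 := by
  have hmin : ∀ z, FBar n (FBarMinimizer n) ≤ FBar n z := fun z => by
    rw [FBar_FBarMinimizer n hn, FBar_eq_norm_sub_sq n hn]
    linarith [sq_nonneg ‖z - FBarMinimizer n‖]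
  have hinf : ⨅ z, FBar n z = FBar n (FBarMinimizer n) :=
    IsGLB.ciInf_eq (IsLeast.isGLB ⟨⟨_, rfl⟩, Set.forall_mem_range.mpr hmin⟩)
  refine ⟨hmin, fun z hz => ?_, fun x hx => ?_⟩
  · have hle := hz (FBarMinimizer n)
    rw [FBar_FBarMinimizer n hn, FBar_eq_norm_sub_sq n hn] at hle
    have hdist : ‖z - FBarMinimizer n‖ ^ 2 = 0 := le_antisymm (by linarith) (sq_nonneg _)
    exact sub_eq_zero.mp (norm_eq_zero.mp (pow_eq_zero_iff two_ne_zero |>.mp hdist))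
  · rw [hinf, FBar_FBarMinimizer n hn, FBar_eq_norm_sub_sq n hn]
    linarith [half_le_norm_sub_FBarMinimizer_sq n hn x hx]
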